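/- Let w be a weight profile on n agents, let ŵ(i,j) = w_ij + w_ji be the flattened weights, and let M* be a matching on the agents (a set of pairwise disjoint unordered pairs) maximizing Σ_{{i,j}∈M} ŵ(i,j) over all matchings. Let π be the partition whose blocks are the pairs of M* together with singletons for unmatched agents. Then the optimal ASHG social welfare satisfies opt_w ≤ n · SW_w(π). -/

import Mathlib

noncomputable section

open Finset

/-- A partition of the agents `Fin n`, given by the block (coalition) of each agent. -/
structure HGPartition (n : ℕ) where
  block : Fin n → Finset (Fin n)
  mem_block : ∀ i, i ∈ block i
  block_eq : ∀ i j, j ∈ block i → block j = block i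

/-- ASHG utility of an agent with score row `wi` for a coalition `C` containing her. -/
def uA {n : ℕ} (wi : Fin n → ℝ) (C : Finset (Fin n)) : ℝ :=
  ∑ j ∈ C, wi j

/-- FHG utility of an agent with score row `wi` for a coalition `C` containing her. -/
def uF {n : ℕ} (wi : Fin n → ℝ) (C : Finset (Fin n)) : ℝ :=
  (∑ j ∈ C, wi j) / C.card

/-- Utilitarian social welfare in ASHGs. -/
def swA {n : ℕ} (w : Fin n → Fin n → ℝ) (π : HGPartition n) : ℝ :=
  ∑ i, uA (w i) (π.block i)

/-- Utilitarian social welfare in FHGs. -/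
def swF {n : ℕ} (w : Fin n → Fin n → ℝ) (π : HGPartition n) : ℝ :=
  ∑ i, uF (w i) (π.block i)

/-- A weight profile has zero scores on the diagonal. -/
def ZeroDiag {n : ℕ} (w : Fin n → Fin n → ℝ) : Prop := ∀ i, w i i = 0

/-- A matching on the agents: a set of (ordered representatives of) pairwise disjoint
unordered pairs of distinct agents. -/
def IsMatching {n : ℕ} (m : Finset (Fin n × Fin n)) : Prop :=
  (∀ p ∈ m, p.1 ≠ p.2) ∧
    ∀ p ∈ m, ∀ q ∈ m, p ≠ q →
      p.1 ≠ q.1 ∧ p.1 ≠ q.2 ∧ p.2 ≠ q.1 ∧ p.2 ≠ q.2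

/-- The value of a matching: the sum of the flattened weights `ŵ(i,j) = w i j + w j i`
over its pairs. -/
def matchValue {n : ℕ} (w : Fin n → Fin n → ℝ) (m : Finset (Fin n × Fin n)) : ℝ :=
  ∑ p ∈ m, (w p.1 p.2 + w p.2 p.1)

/-- `π` is the partition whose blocks are the pairs of the matching `m`,
together with singletons for the unmatched agents. -/
def InducedByMatching {n : ℕ} (m : Finset (Fin n × Fin n)) (π : HGPartition n) : Prop :=
  (∀ p ∈ m, π.block p.1 = {p.1, p.2}) ∧
    ∀ i : Fin n, (∀ p ∈ m, i ≠ p.1 ∧ i ≠ p.2) → π.block i = {i}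

lemma HGPartition.mem_block_symm {n : ℕ} (π : HGPartition n) {i j : Fin n}
    (h : j ∈ π.block i) : i ∈ π.block j := by
  rw [π.block_eq i j h]; exact π.mem_block i

lemma swA_induced {n : ℕ} (w : Fin n → Fin n → ℝ) (hw : ZeroDiag w)
    (m : Finset (Fin n × Fin n)) (hm : IsMatching m)
    (π : HGPartition n) (hπ : InducedByMatching m π) :
    swA w π = matchValue w m := by
  classical
  set A := m.image Prod.fst with hA
  set B := m.image Prod.snd with hB
  have hdisj : Disjoint A B := by
    rw [Finset.disjoint_left]
    intro x hxA hxB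
    obtain ⟨p, hp, hp1⟩ := Finset.mem_image.1 hxA
    obtain ⟨q, hq, hq1⟩ := Finset.mem_image.1 hxB
    by_cases hpq : p = q
    · subst hpq; exact hm.1 p hp (hp1.trans hq1.symm)
    · exact (hm.2 p hp q hq hpq).2.1 (hp1.trans hq1.symm)
  have hsub : A ∪ B ⊆ Finset.univ := Finset.subset_univ _
  have hzero : ∀ i ∈ Finset.univ, i ∉ A ∪ B → uA (w i) (π.block i) = 0 := by
    intro i _ hi
    rw [Finset.mem_union, not_or] at hi
    have hun : ∀ p ∈ m, i ≠ p.1 ∧ i ≠ p.2 := by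
      intro p hp
      constructor
      · intro h; exact hi.1 (Finset.mem_image.2 ⟨p, hp, h.symm⟩)
      · intro h; exact hi.2 (Finset.mem_image.2 ⟨p, hp, h.symm⟩)
    rw [hπ.2 i hun]
    simp [uA, hw i]
  have hblock2 : ∀ p ∈ m, π.block p.2 = {p.1, p.2} := by
    intro p hp
    have h1 := hπ.1 p hp
    have : p.2 ∈ π.block p.1 := by rw [h1]; simp
    rw [π.block_eq p.1 p.2 this, h1]
  have hswA : swA w π = ∑ i ∈ A ∪ B, uA (w i) (π.block i) :=
    (Finset.sum_subset hsub hzero).symm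
  rw [hswA, Finset.sum_union hdisj]
  have hfstinj : ∀ p ∈ m, ∀ q ∈ m, p.1 = q.1 → p = q := by
    intro p hp q hq h
    by_contra hpq
    exact (hm.2 p hp q hq hpq).1 h
  have hsndinj : ∀ p ∈ m, ∀ q ∈ m, p.2 = q.2 → p = q := by
    intro p hp q hq h
    by_contra hpq
    exact (hm.2 p hp q hq hpq).2.2.2 h
  have hAsum : ∑ i ∈ A, uA (w i) (π.block i) = ∑ p ∈ m, w p.1 p.2 := by
    rw [hA, Finset.sum_image hfstinj]
    refine Finset.sum_congr rfl fun p hp => ?_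
    rw [hπ.1 p hp]
    rw [uA, Finset.sum_pair (hm.1 p hp)]
    rw [hw p.1]; ring
  have hBsum : ∑ i ∈ B, uA (w i) (π.block i) = ∑ p ∈ m, w p.2 p.1 := by
    rw [hB, Finset.sum_image hsndinj]
    refine Finset.sum_congr rfl fun p hp => ?_
    rw [hblock2 p hp]
    rw [uA, Finset.sum_pair (hm.1 p hp)]
    rw [hw p.2]; ring
  rw [hAsum, hBsum, matchValue, ← Finset.sum_add_distrib]
def rk {n : ℕ} (π : HGPartition n) (i : Fin n) : ℕ :=
  ((π.block i).filter (fun j => j < i)).card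

lemma rk_lt_card {n : ℕ} (π : HGPartition n) (i : Fin n) :
    rk π i < (π.block i).card := by
  apply Finset.card_lt_card
  refine ⟨Finset.filter_subset _ _, fun hsub => ?_⟩
  have := hsub (π.mem_block i)
  simp at this

lemma rk_lt_of_eq {n : ℕ} (π : HGPartition n) {x y : Fin n}
    (h : π.block x = π.block y) : rk π x < (π.block y).card :=
  h ▸ rk_lt_card π x

lemma rk_strictmono {n : ℕ} (π : HGPartition n) {i j : Fin n}
    (hb : π.block i = π.block j) (hij : i < j) : rk π i < rk π j := by
  unfold rk
  rw [hb]
  apply Finset.card_lt_card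
  constructor
  · intro x hx
    simp only [Finset.mem_filter] at hx ⊢
    exact ⟨hx.1, hx.2.trans hij⟩
  · intro hsub
    have hi : i ∈ (π.block j).filter (fun x => x < j) := by
      simp only [Finset.mem_filter]
      refine ⟨?_, hij⟩
      rw [← hb]; exact π.mem_block i
    have := hsub hi
    simp at this

lemma rk_inj {n : ℕ} (π : HGPartition n) {i j : Fin n}
    (hb : π.block i = π.block j) (h : rk π i = rk π j) : i = j := by
  rcases lt_trichotomy i j with h1 | h1 | h1
  · exact absurd h (rk_strictmono π hb h1).ne
  · exact h1
  · exact absurd h.symm (rk_strictmono π hb.symm h1).ne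

lemma mod_add_cancel {k a b b' : ℕ} (hb : b < k) (hb' : b' < k)
    (h : (a + b) % k = (a + b') % k) : b = b' := by
  have h2 : b ≡ b' [MOD k] := Nat.ModEq.add_left_cancel' a h
  unfold Nat.ModEq at h2
  rwa [Nat.mod_eq_of_lt hb, Nat.mod_eq_of_lt hb'] at h2

/-- Flattened weight of a pair. -/
def Wf {n : ℕ} (w : Fin n → Fin n → ℝ) (p : Fin n × Fin n) : ℝ :=
  w p.1 p.2 + w p.2 p.1

/-- The color of an in-block edge. -/
def colF {n : ℕ} (π : HGPartition n) (p : Fin n × Fin n) : ℕ :=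
  (rk π p.1 + rk π p.2) % (π.block p.1).card

/-- Color class of a color `c`: positive in-block edges of color `c`. -/
def mC {n : ℕ} (w : Fin n → Fin n → ℝ) (π : HGPartition n)
    (E : Finset (Fin n × Fin n)) (c : ℕ) : Finset (Fin n × Fin n) :=
  E.filter (fun p => 0 < Wf w p ∧ colF π p = c % (π.block p.1).card)

lemma mC_isMatching {n : ℕ} (w : Fin n → Fin n → ℝ) (π : HGPartition n)
    (E : Finset (Fin n × Fin n))
    (hE : ∀ p ∈ E, p.2 ∈ π.block p.1 ∧ p.1 < p.2) (c : ℕ) :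
    IsMatching (mC w π E c) := by
  constructor
  · intro p hp
    exact (hE p (Finset.mem_filter.1 hp).1).2.ne
  · intro p hp q hq hpq
    obtain ⟨hpE, -, hpc⟩ := Finset.mem_filter.1 hp |>.imp id (fun h => h)
    obtain ⟨hqE, -, hqc⟩ := Finset.mem_filter.1 hq |>.imp id (fun h => h)
    obtain ⟨hpb, hplt⟩ := hE p hpE
    obtain ⟨hqb, hqlt⟩ := hE q hqE
    have hbp2 : π.block p.2 = π.block p.1 := π.block_eq _ _ hpb
    have hbq2 : π.block q.2 = π.block q.1 := π.block_eq _ _ hqb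
    unfold colF at hpc hqc
    refine ⟨?_, ?_, ?_, ?_⟩
    · -- p.1 = q.1 → contradiction
      intro h
      have hblk : π.block p.1 = π.block q.1 := by rw [h]
      rw [← h] at hqc
      have h1 : rk π p.2 < (π.block p.1).card := rk_lt_of_eq π hbp2
      have h2 : rk π q.2 < (π.block p.1).card := rk_lt_of_eq π (hbq2.trans hblk.symm)
      have := mod_add_cancel h1 h2 (hpc.trans hqc.symm)
      have h22 : p.2 = q.2 := rk_inj π (hbp2.trans (hblk.trans hbq2.symm)) this
      exact hpq (Prod.ext h h22)
    · -- p.1 = q.2 → contradiction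
      intro h
      have hblk : π.block p.1 = π.block q.1 := by rw [h]; exact hbq2
      rw [← hblk, ← h] at hqc
      rw [Nat.add_comm (rk π q.1) (rk π p.1)] at hqc
      have h1 : rk π p.2 < (π.block p.1).card := rk_lt_of_eq π hbp2
      have h2 : rk π q.1 < (π.block p.1).card := rk_lt_of_eq π hblk.symm
      have := mod_add_cancel h1 h2 (hpc.trans hqc.symm)
      have h21 : p.2 = q.1 := rk_inj π (hbp2.trans hblk) this
      exact absurd (((hqlt.trans_eq h.symm).trans hplt).trans_eq h21) (lt_irrefl _)
    · -- p.2 = q.1 → contradiction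
      intro h
      have hblk : π.block p.1 = π.block q.1 := by rw [← hbp2, h]
      rw [← hblk] at hqc
      rw [Nat.add_comm (rk π p.1) (rk π p.2), h] at hpc
      have h1 : rk π p.1 < (π.block p.1).card := rk_lt_card π p.1
      have h2 : rk π q.2 < (π.block p.1).card := rk_lt_of_eq π (hbq2.trans hblk.symm)
      have := mod_add_cancel h1 h2 (hpc.trans hqc.symm)
      have h12 : p.1 = q.2 := rk_inj π (hbq2.trans hblk.symm).symm this
      exact absurd (((hplt.trans_eq h).trans hqlt).trans_eq h12.symm) (lt_irrefl _)
    · -- p.2 = q.2 → contradiction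
      intro h
      have hblk : π.block p.1 = π.block q.1 := by rw [← hbp2, h, hbq2]
      rw [← hblk] at hqc
      rw [Nat.add_comm (rk π p.1) (rk π p.2)] at hpc
      rw [Nat.add_comm (rk π q.1) (rk π q.2), ← h] at hqc
      have h1 : rk π p.1 < (π.block p.1).card := rk_lt_card π p.1
      have h2 : rk π q.1 < (π.block p.1).card := by
        rw [hblk]; exact rk_lt_card π q.1
      have := mod_add_cancel h1 h2 (hpc.trans hqc.symm)
      have h11 : p.1 = q.1 := rk_inj π hblk this
      exact hpq (Prod.ext h11 h)
lemma swA_eq_edges {n : ℕ} (w : Fin n → Fin n → ℝ) (hw : ZeroDiag w) (π' : HGPartition n) :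
    swA w π' = ∑ p ∈ Finset.univ.filter
      (fun p : Fin n × Fin n => p.2 ∈ π'.block p.1 ∧ p.1 < p.2), Wf w p := by
  classical
  have h0 : swA w π' =
      ∑ p ∈ Finset.univ.filter (fun p : Fin n × Fin n => p.2 ∈ π'.block p.1), w p.1 p.2 := by
    rw [Finset.sum_filter, Fintype.sum_prod_type]
    unfold swA uA
    refine Finset.sum_congr rfl fun i _ => ?_
    simp only [Finset.sum_ite_mem, Finset.univ_inter]
  rw [h0]
  set S := Finset.univ.filter (fun p : Fin n × Fin n => p.2 ∈ π'.block p.1) with hS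
  set E := Finset.univ.filter
      (fun p : Fin n × Fin n => p.2 ∈ π'.block p.1 ∧ p.1 < p.2) with hE
  have hSE : S.filter (fun p => p.1 < p.2) = E := by
    rw [hS, hE, Finset.filter_filter]
  rw [← Finset.sum_filter_add_sum_filter_not S (fun p => p.1 < p.2) (fun p => w p.1 p.2), hSE]
  have hG : ∑ p ∈ S.filter (fun p => ¬ p.1 < p.2), w p.1 p.2 = ∑ p ∈ E, w p.2 p.1 := by
    rw [← Finset.sum_filter_add_sum_filter_not (S.filter (fun p => ¬ p.1 < p.2))
      (fun p => p.2 < p.1) (fun p => w p.1 p.2)]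
    have hzero : ∑ p ∈ (S.filter (fun p => ¬ p.1 < p.2)).filter (fun p => ¬ p.2 < p.1),
        w p.1 p.2 = 0 := by
      apply Finset.sum_eq_zero
      intro p hp
      simp only [Finset.mem_filter] at hp
      have h12 : p.1 = p.2 := le_antisymm (le_of_not_gt hp.2) (le_of_not_gt hp.1.2)
      rw [← h12, hw p.1]
    rw [hzero, add_zero]
    refine Finset.sum_nbij' (i := Prod.swap) (j := Prod.swap) ?_ ?_ ?_ ?_ ?_
    · intro p hp
      simp only [hS, Finset.mem_filter, Finset.mem_univ, true_and] at hp
      simp only [hE, Finset.mem_filter, Finset.mem_univ, true_and, Prod.fst_swap, Prod.snd_swap]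
      exact ⟨π'.mem_block_symm hp.1.1, hp.2⟩
    · intro p hp
      simp only [hE, Finset.mem_filter, Finset.mem_univ, true_and] at hp
      simp only [hS, Finset.mem_filter, Finset.mem_univ, true_and, Prod.fst_swap, Prod.snd_swap]
      exact ⟨⟨π'.mem_block_symm hp.1, not_lt_of_gt hp.2⟩, hp.2⟩
    · intro p _; exact Prod.swap_swap p
    · intro p _; exact Prod.swap_swap p
    · intro p _; rfl
  rw [hG, ← Finset.sum_add_distrib]
  rfl

theorem max_matching_n_approx_ASHG' (n : ℕ) (w : Fin n → Fin n → ℝ) (hw : ZeroDiag w)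
    (m : Finset (Fin n × Fin n)) (hm : IsMatching m)
    (hmax : ∀ m' : Finset (Fin n × Fin n), IsMatching m' →
      matchValue w m' ≤ matchValue w m)
    (π : HGPartition n) (hπ : InducedByMatching m π) :
    ∀ π' : HGPartition n, swA w π' ≤ (n : ℝ) * swA w π := by
  classical
  intro π'
  set E := Finset.univ.filter
      (fun p : Fin n × Fin n => p.2 ∈ π'.block p.1 ∧ p.1 < p.2) with hE
  have hEmem : ∀ p ∈ E, p.2 ∈ π'.block p.1 ∧ p.1 < p.2 := by
    intro p hp
    simpa only [hE, Finset.mem_filter, Finset.mem_univ, true_and] using hp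
  rw [swA_eq_edges w hw π', swA_induced w hw m hm π hπ, ← hE]
  set P := E.filter (fun p => 0 < Wf w p) with hP
  have step1 : ∑ p ∈ E, Wf w p ≤ ∑ p ∈ P, Wf w p := by
    rw [← Finset.sum_filter_add_sum_filter_not E (fun p => 0 < Wf w p) (Wf w), ← hP]
    have h2 : ∑ p ∈ E.filter (fun p => ¬ 0 < Wf w p), Wf w p ≤ 0 :=
      Finset.sum_nonpos fun p hp => le_of_not_gt (Finset.mem_filter.1 hp).2
    linarith
  have cover : ∀ p ∈ P, ∃ c : Fin n, colF π' p = (c : ℕ) % (π'.block p.1).card := by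
    intro p hp
    have hk : 0 < (π'.block p.1).card := Finset.card_pos.2 ⟨p.1, π'.mem_block p.1⟩
    have hkn : (π'.block p.1).card ≤ n := by
      simpa using Finset.card_le_univ (π'.block p.1)
    have hcol : colF π' p < (π'.block p.1).card := Nat.mod_lt _ hk
    exact ⟨⟨colF π' p, lt_of_lt_of_le hcol hkn⟩, (Nat.mod_eq_of_lt hcol).symm⟩
  have step2 : ∑ p ∈ P, Wf w p ≤ ∑ p ∈ P, ∑ c : Fin n,
      (if colF π' p = (c : ℕ) % (π'.block p.1).card then Wf w p else 0) := by
    refine Finset.sum_le_sum fun p hp => ?_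
    obtain ⟨c0, hc0⟩ := cover p hp
    have hWp : 0 < Wf w p := (Finset.mem_filter.1 hp).2
    have hle := Finset.single_le_sum
      (f := fun c : Fin n => if colF π' p = (c : ℕ) % (π'.block p.1).card then Wf w p else 0)
      (fun c _ => by split
                     · exact hWp.le
                     · exact le_refl 0)
      (Finset.mem_univ c0)
    simpa [hc0] using hle
  have step3 : ∑ p ∈ P, ∑ c : Fin n,
      (if colF π' p = (c : ℕ) % (π'.block p.1).card then Wf w p else 0)
      = ∑ c : Fin n, ∑ p ∈ P,
      (if colF π' p = (c : ℕ) % (π'.block p.1).card then Wf w p else 0) :=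
    Finset.sum_comm
  have step4 : ∀ c : Fin n, ∑ p ∈ P,
      (if colF π' p = (c : ℕ) % (π'.block p.1).card then Wf w p else 0)
      = matchValue w (mC w π' E (c : ℕ)) := by
    intro c
    rw [← Finset.sum_filter, hP, Finset.filter_filter]
    rfl
  have step5 : ∀ c : Fin n, matchValue w (mC w π' E (c : ℕ)) ≤ matchValue w m :=
    fun c => hmax _ (mC_isMatching w π' E hEmem (c : ℕ))
  calc ∑ p ∈ E, Wf w p ≤ ∑ p ∈ P, Wf w p := step1
    _ ≤ ∑ p ∈ P, ∑ c : Fin n,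
        (if colF π' p = (c : ℕ) % (π'.block p.1).card then Wf w p else 0) := step2
    _ = ∑ c : Fin n, ∑ p ∈ P,
        (if colF π' p = (c : ℕ) % (π'.block p.1).card then Wf w p else 0) := step3
    _ = ∑ c : Fin n, matchValue w (mC w π' E (c : ℕ)) :=
        Finset.sum_congr rfl fun c _ => step4 c
    _ ≤ ∑ _c : Fin n, matchValue w m := Finset.sum_le_sum fun c _ => step5 c
    _ = (n : ℝ) * matchValue w m := by
        rw [Finset.sum_const, Finset.card_univ, Fintype.card_fin, nsmul_eq_mul]

theorem max_matching_n_approx_ASHG (n : ℕ) (w : Fin n → Fin n → ℝ) (hw : ZeroDiag w)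
    (m : Finset (Fin n × Fin n)) (hm : IsMatching m)
    (hmax : ∀ m' : Finset (Fin n × Fin n), IsMatching m' →
      matchValue w m' ≤ matchValue w m)
    (π : HGPartition n) (hπ : InducedByMatching m π) :
    ∀ π' : HGPartition n, swA w π' ≤ (n : ℝ) * swA w π := by
  exact max_matching_n_approx_ASHG' n w hw m hm hmax π hπ
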